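/- arXiv:2308.02282 — 2 statements merged into one kernel-verified Lean document; each statement's English description precedes it below -/
import Mathlib

section
/- (Domain adaptation bound.) For any hypothesis h ∈ H, the target error satisfies ε_Q(h) ≤ λ + ε_P(h) + (1/2) d_{HΔH}(Q,P), where λ = min_{h'∈H} (ε_P(h') + ε_Q(h')) is the error of an ideal joint hypothesis. -/
open MeasureTheory Finset

variable {X : Type*}

/-- Interpret a Boolean hypothesis value as a real number in {0,1}. -/
noncomputable def b2r (b : Bool) : ℝ := if b then 1 else 0

/-- The H-divergence: d_H(P,Q) = 2 · sup_{h∈H} |P({h=1}) − Q({h=1})|. -/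
noncomputable def dH [MeasurableSpace X] (H : Set (X → Bool)) (P Q : Measure X) : ℝ :=
  2 * ⨆ h : H, |(P {x | (h : X → Bool) x = true}).toReal -
    (Q {x | (h : X → Bool) x = true}).toReal|

/-- The error ε_P(h) = E_{x∼P} |h(x) − h*(x)|. -/
noncomputable def err [MeasurableSpace X] (P : Measure X) (h hstar : X → Bool) : ℝ :=
  ∫ x, |b2r (h x) - b2r (hstar x)| ∂P

/-- The symmetric difference hypothesis class HΔH. -/
def sdClass (H : Set (X → Bool)) : Set (X → Bool) :=
  {g | ∃ h ∈ H, ∃ h' ∈ H, g = fun x => xor (h x) (h' x)}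

/-!
Errors are masses of disagreement sets, so `err μ` is a pseudometric on hypotheses. Let `g ∈ H`
attain `λ`. Then `ε_Q(h) ≤ ε_Q(h, g) + ε_Q(g)`, and since the disagreement set of `h` and `g` is
`{h ⊕ g = 1}` with `h ⊕ g ∈ HΔH`, moving from `Q` to `P` costs at most `d_{HΔH}(Q, P) / 2`:
`ε_Q(h, g) ≤ ε_P(h, g) + d/2 ≤ ε_P(h) + ε_P(g) + d/2`.
-/

lemma abs_b2r_sub_b2r (a b : Bool) : |b2r a - b2r b| = b2r (xor a b) := by
  cases a <;> cases b <;> simp [b2r]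

lemma b2r_comp_eq_indicator (g : X → Bool) :
    (fun x => b2r (g x)) = {x | g x = true}.indicator 1 := by
  ext x
  cases hx : g x <;> simp [b2r, hx]

lemma xor_mem_sdClass {H : Set (X → Bool)} {h h' : X → Bool} (hh : h ∈ H) (hh' : h' ∈ H) :
    (fun x => xor (h x) (h' x)) ∈ sdClass H :=
  ⟨h, hh, h', hh', rfl⟩

section
variable [MeasurableSpace X]

lemma err_comm (P : Measure X) (h h' : X → Bool) : err P h h' = err P h' h := by
  simp only [err, abs_sub_comm]

lemma err_eq_measureReal (P : Measure X) {h h' : X → Bool} (mh : Measurable h)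
    (mh' : Measurable h') : err P h h' = P.real {x | xor (h x) (h' x) = true} := by
  have hxor : Measurable fun x => xor (h x) (h' x) := by fun_prop
  simp only [err, abs_b2r_sub_b2r]
  rw [b2r_comp_eq_indicator (fun x => xor (h x) (h' x))]
  exact integral_indicator_one (hxor (measurableSet_singleton true))

lemma err_le_err_add_err (P : Measure X) [IsFiniteMeasure P] {h₁ h₂ h₃ : X → Bool}
    (m₁ : Measurable h₁) (m₂ : Measurable h₂) (m₃ : Measurable h₃) :
    err P h₁ h₃ ≤ err P h₁ h₂ + err P h₂ h₃ := by
  simp only [err_eq_measureReal P, *]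
  have hsub : {x | xor (h₁ x) (h₃ x) = true} ⊆
      {x | xor (h₁ x) (h₂ x) = true} ∪ {x | xor (h₂ x) (h₃ x) = true} := by
    intro x
    simp only [Set.mem_union, Set.mem_ofPred_eq]
    cases h₁ x <;> cases h₂ x <;> cases h₃ x <;> decide
  exact (measureReal_mono hsub).trans (measureReal_union_le _ _)

lemma measureReal_sub_le_half_dH (P Q : Measure X) [IsFiniteMeasure P] [IsFiniteMeasure Q]
    {S : Set (X → Bool)} {g : X → Bool} (hg : g ∈ S) :
    P.real {x | g x = true} - Q.real {x | g x = true} ≤ 1 / 2 * dH S P Q := by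
  have hbdd : BddAbove (Set.range fun g : S =>
      |P.real {x | (g : X → Bool) x = true} - Q.real {x | (g : X → Bool) x = true}|) := by
    refine ⟨P.real Set.univ + Q.real Set.univ, ?_⟩
    rintro _ ⟨g, rfl⟩
    dsimp only
    grw [abs_sub, abs_of_nonneg measureReal_nonneg, abs_of_nonneg measureReal_nonneg]
    exact add_le_add (measureReal_mono (Set.subset_univ _)) (measureReal_mono (Set.subset_univ _))
  calc _ ≤ |P.real {x | g x = true} - Q.real {x | g x = true}| := le_abs_self _
    _ ≤ _ := le_ciSup hbdd ⟨g, hg⟩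
    _ = 1 / 2 * dH S P Q := by simp only [dH, Measure.real]; ring

lemma err_le_err_add_half_dH (P Q : Measure X) [IsFiniteMeasure P] [IsFiniteMeasure Q]
    {H : Set (X → Bool)} {h h' : X → Bool} (hh : h ∈ H) (hh' : h' ∈ H)
    (mh : Measurable h) (mh' : Measurable h') :
    err Q h h' ≤ err P h h' + 1 / 2 * dH (sdClass H) Q P := by
  rw [err_eq_measureReal Q mh mh', err_eq_measureReal P mh mh']
  linarith [measureReal_sub_le_half_dH Q P (xor_mem_sdClass hh hh')]

end

theorem da_bound [MeasurableSpace X] (H : Finset (X → Bool)) (hne : H.Nonempty)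
    (hm : ∀ h ∈ H, Measurable h) (hstar : X → Bool) (hms : Measurable hstar)
    (P Q : Measure X) [IsProbabilityMeasure P] [IsProbabilityMeasure Q]
    (h : X → Bool) (hh : h ∈ H) :
    err Q h hstar ≤ (H.inf' hne fun h' => err P h' hstar + err Q h' hstar)
      + err P h hstar + (1 / 2) * dH (sdClass ↑H) Q P := by
  obtain ⟨g, hg, hinf⟩ := Finset.exists_mem_eq_inf' hne fun h' => err P h' hstar + err Q h' hstar
  rw [hinf]
  have mh := hm h hh
  have mg := hm g hg
  calc err Q h hstar ≤ err Q h g + err Q g hstar := err_le_err_add_err Q mh mg hms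
    _ ≤ err P h g + 1 / 2 * dH (sdClass ↑H) Q P + err Q g hstar := by
      gcongr
      exact err_le_err_add_half_dH P Q hh hg mh mg
    _ ≤ err P h hstar + err P hstar g + 1 / 2 * dH (sdClass ↑H) Q P + err Q g hstar := by
      gcongr
      exact err_le_err_add_err P mh hms mg
    _ = err P g hstar + err Q g hstar + err P h hstar + 1 / 2 * dH (sdClass ↑H) Q P := by
      rw [err_comm P hstar g]
      ring
end

section
/- (Proposition, worst-case latent distribution bound.) Let Q and P_1,…,P_K be distributions over X, φ_1,…,φ_K nonnegative coefficients summing to 1, and O a set of distributions such that every S ∈ O satisfies d_{HΔH}(Σ_i φ_i P_i, S) ≤ max_{i,j} d_{HΔH}(P_i, P_j). Then for any h ∈ H, ε_Q(h) ≤ λ' + Σ_i φ_i ε_{P_i}(h) + (1/2) inf_{S∈O} d_{HΔH}(S, Q) + (1/2) max_{i,j} d_{HΔH}(P_i, P_j), where λ' is the sum of the ideal-joint-hypothesis errors arising in the two applications of the domain adaptation bound. -/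
open MeasureTheory Finset

variable {X : Type*}

/-!
Apply the domain adaptation bound twice, from the mixture `∑ φᵢ Pᵢ` to some `S ∈ O` and from `S`
to `Q`. The error under the mixture is the `φ`-weighted average of the errors under the `Pᵢ`, the
divergence between the mixture and `S` is at most `max_{i,j} d(Pᵢ, Pⱼ)` by assumption, and the
remaining term `d(S, Q)` is then minimised over `S ∈ O`.
-/

lemma dH_comm [MeasurableSpace X] (H : Set (X → Bool)) (P Q : Measure X) :
    dH H P Q = dH H Q P := by
  unfold dH
  congr 1
  exact iSup_congr fun g => abs_sub_comm _ _

lemma integrable_err_integrand [MeasurableSpace X] (P : Measure X) [IsFiniteMeasure P]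
    {h hstar : X → Bool} (mh : Measurable h) (mhstar : Measurable hstar) :
    Integrable (fun x => |b2r (h x) - b2r (hstar x)|) P := by
  have hb2r : Measurable b2r := measurable_of_countable b2r
  refine Integrable.of_bound ((hb2r.comp mh).sub (hb2r.comp mhstar)).abs.aestronglyMeasurable 1
    (ae_of_all _ fun x => ?_)
  cases h x <;> cases hstar x <;> norm_num [b2r]

section Mixture

variable [MeasurableSpace X] {ι : Type*} (s : Finset ι) (μ : ι → Measure X) {φ : ι → ℝ}

lemma isProbabilityMeasure_finset_sum_ofReal_smul [∀ i, IsProbabilityMeasure (μ i)]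
    (hφ : ∀ i ∈ s, 0 ≤ φ i) (hsum : ∑ i ∈ s, φ i = 1) :
    IsProbabilityMeasure (∑ i ∈ s, ENNReal.ofReal (φ i) • μ i) := by
  constructor
  simp only [Measure.finsetSum_apply, Measure.smul_apply, smul_eq_mul, measure_univ, mul_one]
  rw [← ENNReal.ofReal_sum_of_nonneg hφ, hsum, ENNReal.ofReal_one]

lemma integral_finset_sum_ofReal_smul (hφ : ∀ i ∈ s, 0 ≤ φ i) {f : X → ℝ}
    (hf : ∀ i ∈ s, Integrable f (μ i)) :
    ∫ x, f x ∂(∑ i ∈ s, ENNReal.ofReal (φ i) • μ i) = ∑ i ∈ s, φ i * ∫ x, f x ∂μ i := by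
  rw [integral_finsetSum_measure fun i hi => (hf i hi).smul_measure ENNReal.ofReal_ne_top]
  refine Finset.sum_congr rfl fun i hi => ?_
  rw [integral_smul_measure, ENNReal.toReal_ofReal (hφ i hi), smul_eq_mul]

lemma err_finset_sum_ofReal_smul [∀ i, IsFiniteMeasure (μ i)] (hφ : ∀ i ∈ s, 0 ≤ φ i)
    {h hstar : X → Bool} (mh : Measurable h) (mhstar : Measurable hstar) :
    err (∑ i ∈ s, ENNReal.ofReal (φ i) • μ i) h hstar = ∑ i ∈ s, φ i * err (μ i) h hstar :=
  integral_finset_sum_ofReal_smul s μ hφ fun i _ => integrable_err_integrand (μ i) mh mhstar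

end Mixture

theorem worst_case_bound_general [MeasurableSpace X] (H : Finset (X → Bool))
    (hm : ∀ h ∈ H, Measurable h) (hstar : X → Bool) (hms : Measurable hstar)
    {K : ℕ} [NeZero K] (P : Fin K → Measure X) [∀ i, IsProbabilityMeasure (P i)]
    (φ : Fin K → ℝ) (hφ : ∀ i, 0 ≤ φ i) (hsum : ∑ i, φ i = 1)
    (Q : Measure X) [IsProbabilityMeasure Q]
    (O : Set (Measure X)) (hO : O.Nonempty) (hOp : ∀ S ∈ O, IsProbabilityMeasure S)
    (hOd : ∀ S ∈ O, dH (sdClass ↑H) (∑ i, ENNReal.ofReal (φ i) • P i) S ≤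
      Finset.univ.sup' Finset.univ_nonempty fun i =>
        Finset.univ.sup' Finset.univ_nonempty fun j => dH (sdClass ↑H) (P i) (P j))
    (lam : Measure X → Measure X → ℝ)
    (DA : ∀ P' Q' : Measure X, IsProbabilityMeasure P' → IsProbabilityMeasure Q' →
      ∀ h ∈ H, err Q' h hstar ≤
        lam P' Q' + err P' h hstar + (1 / 2) * dH (sdClass ↑H) Q' P')
    (lam' : ℝ)
    (hlam' : ∀ S ∈ O, lam (∑ i, ENNReal.ofReal (φ i) • P i) S + lam S Q ≤ lam')
    (h : X → Bool) (hh : h ∈ H) :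
    err Q h hstar ≤ lam' + (∑ i, φ i * err (P i) h hstar)
      + (1 / 2) * (⨅ S : O, dH (sdClass ↑H) (S : Measure X) Q)
      + (1 / 2) * (Finset.univ.sup' Finset.univ_nonempty fun i =>
          Finset.univ.sup' Finset.univ_nonempty fun j =>
            dH (sdClass ↑H) (P i) (P j)) := by
  have : Nonempty O := hO.to_subtype
  set mix := ∑ i, ENNReal.ofReal (φ i) • P i
  set maxd := Finset.univ.sup' Finset.univ_nonempty fun i =>
    Finset.univ.sup' Finset.univ_nonempty fun j => dH (sdClass ↑H) (P i) (P j)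
  have : IsProbabilityMeasure mix :=
    isProbabilityMeasure_finset_sum_ofReal_smul _ P (fun i _ => hφ i) hsum
  have err_mix : err mix h hstar = ∑ i, φ i * err (P i) h hstar :=
    err_finset_sum_ofReal_smul _ P (fun i _ => hφ i) (hm h hh) hms
  have through : ∀ S : O, 2 * (err Q h hstar - (lam' + ∑ i, φ i * err (P i) h hstar
      + (1 / 2) * maxd)) ≤ dH (sdClass ↑H) (S : Measure X) Q := by
    rintro ⟨S, hS⟩
    have := hOp S hS
    have mix_to_S := DA mix S inferInstance inferInstance h hh
    have S_to_Q := DA S Q inferInstance inferInstance h hh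
    rw [dH_comm] at mix_to_S S_to_Q
    linarith [hOd S hS, hlam' S hS]
  linarith [le_ciInf through]

theorem worst_case_bound [MeasurableSpace X] (H : Finset (X → Bool)) (hne : H.Nonempty)
    (hm : ∀ h ∈ H, Measurable h) (hstar : X → Bool) (hms : Measurable hstar)
    {K : ℕ} [NeZero K] (P : Fin K → Measure X) [∀ i, IsProbabilityMeasure (P i)]
    (φ : Fin K → ℝ) (hφ : ∀ i, 0 ≤ φ i) (hsum : ∑ i, φ i = 1)
    (Q : Measure X) [IsProbabilityMeasure Q]
    (O : Set (Measure X)) (hO : O.Nonempty) (hOp : ∀ S ∈ O, IsProbabilityMeasure S)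
    (hOd : ∀ S ∈ O, dH (sdClass ↑H) (∑ i, ENNReal.ofReal (φ i) • P i) S ≤
      Finset.univ.sup' Finset.univ_nonempty fun i =>
        Finset.univ.sup' Finset.univ_nonempty fun j => dH (sdClass ↑H) (P i) (P j))
    (lam : Measure X → Measure X → ℝ)
    (hlam : ∀ P' Q' : Measure X,
      lam P' Q' = H.inf' hne fun h' => err P' h' hstar + err Q' h' hstar)
    (DA : ∀ P' Q' : Measure X, IsProbabilityMeasure P' → IsProbabilityMeasure Q' →
      ∀ h ∈ H, err Q' h hstar ≤
        lam P' Q' + err P' h hstar + (1 / 2) * dH (sdClass ↑H) Q' P')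
    (lam' : ℝ)
    (hlam' : ∀ S ∈ O, lam (∑ i, ENNReal.ofReal (φ i) • P i) S + lam S Q ≤ lam')
    (h : X → Bool) (hh : h ∈ H) :
    err Q h hstar ≤ lam' + (∑ i, φ i * err (P i) h hstar)
      + (1 / 2) * (⨅ S : O, dH (sdClass ↑H) (S : Measure X) Q)
      + (1 / 2) * (Finset.univ.sup' Finset.univ_nonempty fun i =>
          Finset.univ.sup' Finset.univ_nonempty fun j =>
            dH (sdClass ↑H) (P i) (P j)) :=
  worst_case_bound_general H hm hstar hms P φ hφ hsum Q O hO hOp hOd lam DA lam' hlam' h hh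
end
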